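/- For all natural numbers n, m, k: S_{s,q}[n+m, k] = Σ_{r=0}^{n} Σ_{j=0}^{m} S_{s,q}[m,j] · q^{(j(1−s)+sm)(k−j)} · binom(r, k−j)_{q^{s−1}} · S_{s,q}[n,r] · Π_{i=0}^{r−k+j−1} [j(1−s) + sm + i·(s−1)]_q, where binom(r, k−j) is interpreted as 0 when j > k and the exponent k − j is computed in ℤ. (Generalized Spivey convolution, second form.) -/

import Mathlib

/-- The `q`-bracket `[t]_q = (q^t - 1)/(q - 1)` (real exponentiation). -/
noncomputable def qBracket (q t : ℝ) : ℝ := (q ^ t - 1) / (q - 1)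

open Classical in
/-- The `Q`-binomial coefficient: the sum of `Q^(t₁+⋯+t_{n-k})` over all weakly
increasing integer tuples `0 ≤ t₁ ≤ ⋯ ≤ t_{n-k} ≤ k` when `k ≤ n`, and `0` when `k > n`. -/
noncomputable def qBinom (Q : ℝ) (n k : ℕ) : ℝ :=
  if k ≤ n then
    ∑ f ∈ Finset.univ.filter (fun f : Fin (n - k) → Fin (k + 1) => Monotone f),
      Q ^ (∑ i, (f i : ℕ))
  else 0

/-- The generalized `q`-Stirling numbers `S_{s,q}[n,k]` of Goldman–Haglund type. -/
noncomputable def genStirling (s q : ℝ) : ℕ → ℕ → ℝ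
  | 0, 0 => 1
  | 0, _ + 1 => 0
  | _ + 1, 0 => 0
  | n + 1, k + 1 =>
    if k + 1 ≤ n + 1 then
      q ^ (s * (n : ℝ) - (s - 1) * (k : ℝ)) * genStirling s q n k
        + qBracket q (s * (n : ℝ) - (s - 1) * ((k : ℝ) + 1)) * genStirling s q n (k + 1)
    else 0

/-!
Induction on `n`. Fix `j`, put `a = j(1-s) + sm`, and let `H_n(c)` be the inner sum
`∑_r S[n,r] q^{ac} binom(r,c)_{q^{s-1}} ∏_{i<r-c} [a + i(s-1)]_q` (zero for `c < 0`). Then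
`H_{n+1}(c+1) = q^{sn+a-(s-1)c} H_n(c) + [sn+a-(s-1)(c+1)]_q H_n(c+1)`, and at `c = k - j` this is
the recurrence of `S[n+m, k+1]`, independently of `j`. Expanding `S[n+1,r]` by its recurrence turns
this into a termwise identity, which is the `q`-Pascal rule
`binom(r+1,c+1)_Q = binom(r,c+1)_Q + Q^{r-c} binom(r,c)_Q` together with
`[x+y]_q = [x]_q + q^x [y]_q`.
-/

open Finset

theorem qBracket_zero (q : ℝ) : qBracket q 0 = 0 := by
  simp [qBracket]

theorem qBracket_add {q : ℝ} (hq : 0 < q) (x y : ℝ) :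
    qBracket q (x + y) = qBracket q x + q ^ x * qBracket q y := by
  rcases eq_or_ne q 1 with rfl | hq1
  · simp [qBracket]
  have : q - 1 ≠ 0 := sub_ne_zero.mpr hq1
  simp only [qBracket, Real.rpow_add hq]
  field_simp
  ring

section MonotoneTupleSum

open Classical in
noncomputable def monotoneTupleSum (Q : ℝ) (d c : ℕ) : ℝ :=
  ∑ f ∈ univ.filter (fun f : Fin d → Fin (c + 1) => Monotone f), Q ^ (∑ i, (f i : ℕ))

theorem monotoneTupleSum_zero_right (Q : ℝ) (d : ℕ) : monotoneTupleSum Q d 0 = 1 := by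
  have hall : ∀ f : Fin d → Fin 1, Monotone f := fun f _ _ _ => le_of_eq (Subsingleton.elim _ _)
  simp [monotoneTupleSum, hall]

theorem monotoneTupleSum_zero_left (Q : ℝ) (c : ℕ) : monotoneTupleSum Q 0 c = 1 := by
  have hall : ∀ f : Fin 0 → Fin (c + 1), Monotone f := fun _ a => a.elim0
  simp [monotoneTupleSum, hall]

theorem Fin.monotone_cons_zero_iff {d c : ℕ} {f : Fin d → Fin (c + 1)} :
    Monotone (Fin.cons 0 f : Fin (d + 1) → Fin (c + 1)) ↔ Monotone f := by
  simpa [monotone_iff_forall_lt, Relator.LiftFun, Fin.zero_le] using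
    Fin.liftFun_cons (α := Fin (c + 1)) (· ≤ ·) (f := f) (a := 0)

variable (Q : ℝ) (d c : ℕ)

theorem sum_monotone_head_eq_zero :
    ∑ f ∈ univ.filter (fun f : Fin (d + 1) → Fin (c + 2) => Monotone f ∧ f 0 = 0),
      Q ^ (∑ i, (f i : ℕ)) = monotoneTupleSum Q d (c + 1) := by
  classical
  symm
  refine sum_nbij' (fun g => Fin.cons 0 g) Fin.tail ?_ ?_ ?_ ?_ ?_
  · intro g hg
    simp_all [Fin.monotone_cons_zero_iff]
  · intro f hf
    simp only [mem_filter, mem_univ, true_and] at hf ⊢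
    exact hf.1.comp Fin.strictMono_succ.monotone
  · intro g _
    exact Fin.tail_cons _ _
  · intro f hf
    simp only [mem_filter, mem_univ, true_and] at hf
    rw [← hf.2]
    exact Fin.cons_self_tail f
  · intro g _
    simp [Fin.sum_univ_succ]

theorem sum_monotone_head_ne_zero :
    ∑ f ∈ univ.filter (fun f : Fin (d + 1) → Fin (c + 2) => Monotone f ∧ f 0 ≠ 0),
      Q ^ (∑ i, (f i : ℕ)) = Q ^ (d + 1) * monotoneTupleSum Q (d + 1) c := by
  classical
  rw [monotoneTupleSum, mul_sum]
  symm
  refine sum_bij (fun g _ => Fin.succ ∘ g) ?_ ?_ ?_ ?_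
  · intro g hg
    simp only [mem_filter, mem_univ, true_and] at hg ⊢
    exact ⟨Fin.strictMono_succ.monotone.comp hg, Fin.succ_ne_zero _⟩
  · intro g₁ _ g₂ _ h
    exact funext fun i => Fin.succ_injective _ (congrFun h i)
  · intro f hf
    simp only [mem_filter, mem_univ, true_and] at hf
    have hne : ∀ i, f i ≠ 0 := fun i h0 =>
      hf.2 (le_antisymm (h0 ▸ hf.1 (Fin.zero_le i)) (Fin.zero_le _))
    refine ⟨fun i => (f i).pred (hne i), ?_, funext fun i => Fin.succ_pred _ _⟩
    simp only [mem_filter, mem_univ, true_and]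
    exact fun i j hij => Fin.pred_le_pred_iff.mpr (hf.1 hij)
  · intro g _
    simp [Fin.val_succ, sum_add_distrib, pow_add, mul_comm]

theorem monotoneTupleSum_succ_succ :
    monotoneTupleSum Q (d + 1) (c + 1)
      = monotoneTupleSum Q d (c + 1) + Q ^ (d + 1) * monotoneTupleSum Q (d + 1) c := by
  classical
  conv_lhs => rw [monotoneTupleSum, ← sum_filter_add_sum_filter_not _ (fun f => f 0 = 0),
    filter_filter, filter_filter]
  rw [sum_monotone_head_eq_zero, sum_monotone_head_ne_zero]

end MonotoneTupleSum

section QBinom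

variable (Q : ℝ)

theorem qBinom_of_le {n k : ℕ} (h : k ≤ n) : qBinom Q n k = monotoneTupleSum Q (n - k) k := by
  rw [qBinom, if_pos h, monotoneTupleSum]

theorem qBinom_of_lt {n k : ℕ} (h : n < k) : qBinom Q n k = 0 := by
  rw [qBinom, if_neg h.not_ge]

theorem qBinom_zero_right (n : ℕ) : qBinom Q n 0 = 1 := by
  rw [qBinom_of_le Q n.zero_le, monotoneTupleSum_zero_right]

theorem qBinom_self (n : ℕ) : qBinom Q n n = 1 := by
  rw [qBinom_of_le Q le_rfl, Nat.sub_self, monotoneTupleSum_zero_left]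

theorem qBinom_succ_succ (n k : ℕ) :
    qBinom Q (n + 1) (k + 1) = qBinom Q n (k + 1) + Q ^ (n - k) * qBinom Q n k := by
  rcases lt_trichotomy k n with hkn | rfl | hnk
  · obtain ⟨t, rfl⟩ := Nat.exists_eq_add_of_lt hkn
    rw [qBinom_of_le Q (by omega), qBinom_of_le Q (by omega), qBinom_of_le Q (by omega),
      show k + t + 1 + 1 - (k + 1) = t + 1 by omega, show k + t + 1 - (k + 1) = t by omega,
      show k + t + 1 - k = t + 1 by omega, monotoneTupleSum_succ_succ]
  · simp [qBinom_self, qBinom_of_lt Q (Nat.lt_succ_self k)]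
  · simp [qBinom_of_lt Q hnk, qBinom_of_lt Q (Nat.succ_lt_succ hnk),
      qBinom_of_lt Q (hnk.trans (Nat.lt_succ_self k))]

end QBinom

section GenStirling

variable (s q : ℝ)

theorem genStirling_of_lt {n k : ℕ} (h : n < k) : genStirling s q n k = 0 := by
  obtain ⟨k, rfl⟩ := Nat.exists_eq_succ_of_ne_zero (Nat.ne_zero_of_lt h)
  cases n with
  | zero => rfl
  | succ n => rw [genStirling, if_neg (by omega)]

theorem genStirling_succ_zero (n : ℕ) : genStirling s q (n + 1) 0 = 0 := rfl

theorem genStirling_succ_succ (n k : ℕ) :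
    genStirling s q (n + 1) (k + 1)
      = q ^ (s * n - (s - 1) * k) * genStirling s q n k
        + qBracket q (s * n - (s - 1) * (k + 1)) * genStirling s q n (k + 1) := by
  rw [genStirling]
  split_ifs with h
  · rfl
  · simp [genStirling_of_lt s q (by omega : n < k), genStirling_of_lt s q (by omega : n < k + 1)]

theorem sum_genStirling_succ_mul (n : ℕ) (f : ℕ → ℝ) :
    ∑ r ∈ range (n + 2), genStirling s q (n + 1) r * f r
      = ∑ r ∈ range (n + 1), genStirling s q n r *
          (q ^ (s * n - (s - 1) * r) * f (r + 1) + qBracket q (s * n - (s - 1) * r) * f r) := by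
  have hbottom : qBracket q (s * n - (s - 1) * (0 : ℕ)) * genStirling s q n 0 = 0 := by
    cases n with
    | zero => simp [qBracket_zero]
    | succ n => rw [genStirling_succ_zero, mul_zero]
  have htop : genStirling s q n (n + 1) = 0 := genStirling_of_lt s q n.lt_succ_self
  rw [sum_range_succ', genStirling_succ_zero, zero_mul, add_zero]
  simp only [genStirling_succ_succ, add_mul, mul_add (genStirling s q n _), sum_add_distrib]
  congr 1
  · exact sum_congr rfl fun r _ => by ring
  · have hshift := sum_range_succ'
      (fun r => qBracket q (s * n - (s - 1) * r) * genStirling s q n r * f r) (n + 1)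
    rw [sum_range_succ, htop] at hshift
    simp only [hbottom, mul_zero, zero_mul, add_zero, Nat.cast_succ] at hshift
    rw [← hshift]
    exact sum_congr rfl fun r _ => by ring

end GenStirling

section SpiveyWeight

noncomputable def spiveyWeight (q a d : ℝ) (r : ℕ) : ℤ → ℝ
  | (c : ℕ) => q ^ (a * c) * qBinom (q ^ d) r c * ∏ i ∈ range (r - c), qBracket q (a + i * d)
  | Int.negSucc _ => 0

variable {q : ℝ} (a d : ℝ)

@[simp]
theorem spiveyWeight_natCast (r c : ℕ) :
    spiveyWeight q a d r c
      = q ^ (a * c) * qBinom (q ^ d) r c * ∏ i ∈ range (r - c), qBracket q (a + i * d) :=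
  rfl

@[simp]
theorem spiveyWeight_negSucc (r c : ℕ) : spiveyWeight q a d r (Int.negSucc c) = 0 := rfl

theorem spiveyWeight_zero_left (c : ℤ) : spiveyWeight q a d 0 c = if c = 0 then 1 else 0 := by
  cases c with
  | ofNat c =>
    rw [Int.ofNat_eq_natCast, spiveyWeight_natCast]
    rcases c with _ | c
    · simp [qBinom_self]
    · simp [qBinom_of_lt _ (Nat.succ_pos c)]
      omega
  | negSucc c => simp

theorem spiveyWeight_zero_succ_zero (r : ℕ) : spiveyWeight q 0 d (r + 1) 0 = 0 := by
  rw [show (0 : ℤ) = (0 : ℕ) from rfl, spiveyWeight_natCast]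
  simp [prod_range_succ', qBracket_zero]

theorem spiveyWeight_natCast_sub (r j k : ℕ) :
    spiveyWeight q a d r ((k : ℤ) - j)
      = q ^ (a * ((k : ℝ) - j)) * (if j ≤ k then qBinom (q ^ d) r (k - j) else 0)
        * ∏ i ∈ range (r + j - k), qBracket q (a + i * d) := by
  by_cases hjk : j ≤ k
  · obtain ⟨c, rfl⟩ := Nat.exists_eq_add_of_le hjk
    simp [show r + j - (j + c) = r - c by omega]
  · obtain ⟨t, rfl⟩ := Nat.exists_eq_add_of_lt (not_le.mp hjk)
    rw [if_neg hjk, show (k : ℤ) - (k + t + 1 : ℕ) = Int.negSucc t by push_cast; omega]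
    simp

theorem spiveyWeight_succ_succ (hq : 0 < q) (r c : ℕ) :
    spiveyWeight q a d (r + 1) (c + 1 : ℕ)
      = q ^ (a + d * (r - c)) * spiveyWeight q a d r c
        + qBracket q (a + d * (r - c - 1)) * spiveyWeight q a d r (c + 1 : ℕ) := by
  set B₀ := qBinom (q ^ d) r c
  set B₁ := qBinom (q ^ d) r (c + 1)
  set P := fun t => ∏ i ∈ range t, qBracket q (a + i * d)
  have hpow : B₀ * (q ^ d) ^ (r - c) = B₀ * q ^ (d * (r - c)) := by
    rcases le_or_gt c r with h | h
    · rw [← Real.rpow_natCast, ← Real.rpow_mul hq.le, Nat.cast_sub h]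
    · simp [B₀, qBinom_of_lt _ h]
  have hprod : B₁ * P (r - c) = B₁ * (qBracket q (a + d * (r - c - 1)) * P (r - (c + 1))) := by
    rcases lt_or_ge c r with h | h
    · obtain ⟨t, rfl⟩ := Nat.exists_eq_add_of_lt h
      have harg : a + d * ((c + t + 1 : ℕ) - c - 1 : ℝ) = a + t * d := by
        push_cast
        ring
      simp only [P, show c + t + 1 - c = t + 1 by omega, show c + t + 1 - (c + 1) = t by omega,
        prod_range_succ, harg]
      ring
    · simp [B₁, qBinom_of_lt _ (Nat.lt_succ_of_le h)]
  have hexp :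
      q ^ (a + d * (r - c)) * q ^ (a * c) = q ^ (a * (c + 1 : ℕ)) * q ^ (d * (r - c)) := by
    rw [← Real.rpow_add hq, ← Real.rpow_add hq]
    push_cast
    ring_nf
  simp only [spiveyWeight_natCast, qBinom_succ_succ, Nat.add_sub_add_right]
  linear_combination q ^ (a * (c + 1 : ℕ)) * hprod + q ^ (a * (c + 1 : ℕ)) * P (r - c) * hpow
    - B₀ * P (r - c) * hexp

theorem spiveyWeight_rec (hq : 0 < q) (b : ℝ) (r : ℕ) (c : ℤ) :
    q ^ (b + a - d * c) * spiveyWeight q a d r c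
        + qBracket q (b + a - d * (c + 1)) * spiveyWeight q a d r (c + 1)
      = q ^ (b - d * r) * spiveyWeight q a d (r + 1) (c + 1)
        + qBracket q (b - d * r) * spiveyWeight q a d r (c + 1) := by
  cases c with
  | ofNat c =>
    have hbr : qBracket q (b + a - d * (c + 1))
        = qBracket q (b - d * r) + q ^ (b - d * r) * qBracket q (a + d * (r - c - 1)) := by
      rw [← qBracket_add hq]
      ring_nf
    have hexp : q ^ (b - d * r) * q ^ (a + d * (r - c)) = q ^ (b + a - d * c) := by
      rw [← Real.rpow_add hq]
      ring_nf
    rw [Int.ofNat_eq_natCast, ← Nat.cast_succ, spiveyWeight_succ_succ a d hq]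
    push_cast
    linear_combination spiveyWeight q a d r ((c : ℤ) + 1) * hbr - spiveyWeight q a d r c * hexp
  | negSucc t =>
    rcases t with _ | t
    · have hbr : qBracket q (b + a)
          = qBracket q (b - d * r) + q ^ (b - d * r) * qBracket q (a + r * d) := by
        rw [← qBracket_add hq]
        ring_nf
      rw [show Int.negSucc 0 + 1 = ((0 : ℕ) : ℤ) from rfl, spiveyWeight_natCast,
        spiveyWeight_natCast, spiveyWeight_negSucc]
      simp only [qBinom_zero_right, Nat.sub_zero, prod_range_succ, Nat.cast_zero, Int.cast_negSucc,
        mul_zero, Real.rpow_zero, mul_one, zero_add, Nat.cast_one, neg_add_cancel, sub_zero]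
      linear_combination (∏ i ∈ range r, qBracket q (a + i * d)) * hbr
    · rw [show Int.negSucc (t + 1) + 1 = Int.negSucc t from rfl]
      simp

end SpiveyWeight

section SpiveySum

noncomputable def spiveySum (s q a : ℝ) (n : ℕ) (c : ℤ) : ℝ :=
  ∑ r ∈ range (n + 1), genStirling s q n r * spiveyWeight q a (s - 1) r c

variable {s q : ℝ} (a : ℝ)

theorem spiveySum_zero (c : ℤ) : spiveySum s q a 0 c = if c = 0 then 1 else 0 := by
  simp [spiveySum, spiveyWeight_zero_left, genStirling]

@[simp]
theorem spiveySum_negSucc (n t : ℕ) : spiveySum s q a n (Int.negSucc t) = 0 := by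
  simp [spiveySum]

theorem spiveySum_zero_succ_zero (n : ℕ) : spiveySum s q 0 (n + 1) 0 = 0 := by
  rw [spiveySum, sum_range_succ']
  simp [spiveyWeight_zero_succ_zero, genStirling_succ_zero]

theorem spiveySum_succ_succ (hq : 0 < q) (n : ℕ) (c : ℤ) :
    spiveySum s q a (n + 1) (c + 1)
      = q ^ (s * n + a - (s - 1) * c) * spiveySum s q a n c
        + qBracket q (s * n + a - (s - 1) * (c + 1)) * spiveySum s q a n (c + 1) := by
  rw [spiveySum, sum_genStirling_succ_mul, spiveySum, spiveySum, mul_sum, mul_sum,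
    ← sum_add_distrib]
  refine sum_congr rfl fun r _ => ?_
  linear_combination -genStirling s q n r * spiveyWeight_rec a (s - 1) hq (s * n) r c

end SpiveySum

theorem genStirling_add_eq_sum_spiveySum {s q : ℝ} (hq : 0 < q) (m n k : ℕ) :
    genStirling s q (n + m) k
      = ∑ j ∈ range (m + 1),
          genStirling s q m j * spiveySum s q (j * (1 - s) + s * m) n ((k : ℤ) - j) := by
  induction n generalizing k with
  | zero =>
    simp only [zero_add, spiveySum_zero, sub_eq_zero, Nat.cast_inj, mul_ite, mul_one, mul_zero,
      sum_ite_eq, mem_range]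
    split_ifs with hk
    · rfl
    · exact genStirling_of_lt s q (by omega)
  | succ n ih =>
    rw [Nat.add_right_comm]
    cases k with
    | zero =>
      -- only `j = 0` has `k - j ≥ 0`; then `S[m,0] = 0` unless `m = 0`, where `a = 0`
      refine (genStirling_succ_zero s q _).trans (sum_eq_zero fun j _ => ?_).symm
      rcases j with _ | j
      · cases m with
        | zero => simp [spiveySum_zero_succ_zero]
        | succ m => simp [genStirling_succ_zero]
      · rw [show ((0 : ℕ) : ℤ) - (j + 1 : ℕ) = Int.negSucc j by push_cast; omega,
          spiveySum_negSucc, mul_zero]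
    | succ k =>
      rw [genStirling_succ_succ, ih, ih, mul_sum, mul_sum, ← sum_add_distrib]
      refine sum_congr rfl fun j _ => ?_
      have hc : ((k + 1 : ℕ) : ℤ) - j = ((k : ℤ) - j) + 1 := by push_cast; ring
      have hexp : s * n + (j * (1 - s) + s * m) - (s - 1) * (((k : ℤ) - j : ℤ) : ℝ)
          = s * (n + m : ℕ) - (s - 1) * k := by push_cast; ring
      have hbr : s * n + (j * (1 - s) + s * m) - (s - 1) * ((((k : ℤ) - j : ℤ) : ℝ) + 1)
          = s * (n + m : ℕ) - (s - 1) * ((k : ℝ) + 1) := by push_cast; ring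
      rw [hc, spiveySum_succ_succ _ hq, hexp, hbr]
      ring

theorem spivey_convolution_second_general (q s : ℝ) (hq : 0 < q) (n m k : ℕ) :
    genStirling s q (n + m) k
    = ∑ r ∈ Finset.range (n + 1), ∑ j ∈ Finset.range (m + 1),
        genStirling s q m j *
          q ^ (((j : ℝ) * (1 - s) + s * (m : ℝ)) * ((k : ℝ) - (j : ℝ))) *
          (if j ≤ k then qBinom (q ^ (s - 1)) r (k - j) else 0) *
          genStirling s q n r *
          ∏ i ∈ Finset.range (r + j - k),
            qBracket q ((j : ℝ) * (1 - s) + s * (m : ℝ) + (i : ℝ) * (s - 1)) := by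
  rw [genStirling_add_eq_sum_spiveySum hq, sum_comm]
  refine sum_congr rfl fun j _ => ?_
  rw [spiveySum, mul_sum]
  refine sum_congr rfl fun r _ => ?_
  rw [spiveyWeight_natCast_sub]
  ring

/-- Generalized Spivey convolution identity, second form. -/
theorem spivey_convolution_second (q s : ℝ) (hq : 0 < q) (hq1 : q ≠ 1) (n m k : ℕ) :
    genStirling s q (n + m) k
    = ∑ r ∈ Finset.range (n + 1), ∑ j ∈ Finset.range (m + 1),
        genStirling s q m j *
          q ^ (((j : ℝ) * (1 - s) + s * (m : ℝ)) * ((k : ℝ) - (j : ℝ))) *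
          (if j ≤ k then qBinom (q ^ (s - 1)) r (k - j) else 0) *
          genStirling s q n r *
          ∏ i ∈ Finset.range (r + j - k),
            qBracket q ((j : ℝ) * (1 - s) + s * (m : ℝ) + (i : ℝ) * (s - 1)) :=
  spivey_convolution_second_general q s hq n m k
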